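/- arXiv:2406.00295 — 7 statements merged into one kernel-verified Lean document; each statement's English description precedes it below -/
import Mathlib

section
/- In the two-road network with constant latencies 1 and ε² (for ε ∈ (0,1)) and unit demand, the flow routing everyone on the first road is an ε-BRUE, the flow routing everyone on the second road minimizes the social cost, and the ratio of the social cost of this ε-BRUE over the minimal social cost equals 1/ε; hence this ratio tends to infinity as ε → 0. -/
/-- Social cost of routing `x` on road 1 (constant latency `ε`) and `1 - x`
on road 2 (constant latency `ε²`), with unit demand. -/
def twoRoadCost (ε x : ℝ) : ℝ := x * ε + (1 - x) * ε ^ 2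

/-- `x` is the flow on road 1; a flow is an `ε`-BRUE if every used road has
latency at most `ε` more than the other road's latency. -/
def twoRoadBRUE (ε x : ℝ) : Prop :=
  0 ≤ x ∧ x ≤ 1 ∧ (0 < x → ε ≤ ε ^ 2 + ε) ∧ (x < 1 → ε ^ 2 ≤ ε + ε)

theorem stmt0 :
    (∀ ε ∈ Set.Ioo (0:ℝ) 1,
      twoRoadBRUE ε 1 ∧
      (∀ x ∈ Set.Icc (0:ℝ) 1, twoRoadCost ε 0 ≤ twoRoadCost ε x) ∧
      twoRoadCost ε 1 / twoRoadCost ε 0 = 1 / ε) ∧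
    Filter.Tendsto (fun ε : ℝ => twoRoadCost ε 1 / twoRoadCost ε 0)
      (nhdsWithin 0 (Set.Ioi 0)) Filter.atTop := by
  constructor
  · rintro ε ⟨hε0, hε1⟩
    refine ⟨⟨zero_le_one, le_refl 1, fun _ => by nlinarith, fun h => absurd h (lt_irrefl 1)⟩,
      fun x ⟨hx0, hx1⟩ => ?_, ?_⟩
    · simp only [twoRoadCost]
      nlinarith [mul_nonneg (mul_nonneg hx0 hε0.le) (by linarith : (0:ℝ) ≤ 1 - ε)]
    · simp only [twoRoadCost]
      field_simp
      ring
  · have h := tendsto_inv_nhdsGT_zero (𝕜 := ℝ)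
    refine h.congr' ?_
    filter_upwards [self_mem_nhdsWithin] with ε (hε : ε ∈ Set.Ioi 0)
    simp only [twoRoadCost]
    rw [Set.mem_Ioi] at hε
    field_simp
    ring
end

section
/- Variational characterization of ε-BRUE: a feasible flow f is an ε-BRUE if and only if for all feasible flows g, Σ_P (f_P − g_P)·c_P(f) ≤ (ε/2)·Σ_P |f_P − g_P|. -/
open Finset

/-- Flow on edge `e` induced by a path flow `g`. -/
def edgeFlow {E P : Type} [Fintype P] [DecidableEq E]
    (edges : P → Finset E) (g : P → ℝ) (e : E) : ℝ :=
  ∑ p ∈ univ.filter (fun p => e ∈ edges p), g p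

/-- Travel time of path `p` under path flow `g`. -/
def pathCost {E P : Type} [Fintype P] [DecidableEq E]
    (edges : P → Finset E) (c : E → ℝ → ℝ) (g : P → ℝ) (p : P) : ℝ :=
  ∑ e ∈ edges p, c e (edgeFlow edges g e)

/-- Feasible flows: nonnegative, satisfying the demand of every trip. -/
def Feasible {T P : Type} [Fintype P] [DecidableEq T]
    (trip : P → T) (d : T → ℝ) (g : P → ℝ) : Prop :=
  (∀ p, 0 ≤ g p) ∧ ∀ t, ∑ p ∈ univ.filter (fun p => trip p = t), g p = d t

/-- `f` is an `ε`-BRUE: every used path is at most `ε` longer than any path of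
the same trip. -/
def IsBRUE {E T P : Type} [Fintype P] [DecidableEq E]
    (trip : P → T) (edges : P → Finset E) (c : E → ℝ → ℝ) (ε : ℝ) (f : P → ℝ) : Prop :=
  ∀ p q, trip p = trip q → 0 < f p →
    pathCost edges c f p ≤ pathCost edges c f q + ε

lemma aux_sum {α : Type*} (s : Finset α) (h cc : α → ℝ) (ε m : ℝ)
    (hsum : ∑ p ∈ s, h p = 0)
    (hub : ∀ p ∈ s, 0 < h p → cc p ≤ m + ε)
    (hlb : ∀ p ∈ s, m ≤ cc p) :
    ∑ p ∈ s, h p * cc p ≤ ε / 2 * ∑ p ∈ s, |h p| := by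
  have key : ∀ p ∈ s, h p * cc p ≤ h p * m + ε / 2 * (|h p| + h p) := by
    intro p hp
    rcases lt_or_ge 0 (h p) with hpos | hneg
    · have habs : |h p| = h p := abs_of_pos hpos
      have := hub p hp hpos
      rw [habs]; nlinarith
    · have hcc := hlb p hp
      have habs : |h p| = -h p := abs_of_nonpos hneg
      rw [habs]; nlinarith
  calc ∑ p ∈ s, h p * cc p ≤ ∑ p ∈ s, (h p * m + ε / 2 * (|h p| + h p)) :=
        Finset.sum_le_sum key
    _ = (∑ p ∈ s, h p) * m + ε / 2 * ((∑ p ∈ s, |h p|) + ∑ p ∈ s, h p) := by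
        rw [Finset.sum_add_distrib, ← Finset.sum_mul, ← Finset.mul_sum,
          Finset.sum_add_distrib]
    _ = ε / 2 * ∑ p ∈ s, |h p| := by rw [hsum]; ring

/-- Variational characterization of `ε`-BRUE. -/
theorem stmt4 {E T P : Type} [Fintype E] [Fintype T] [Fintype P]
    [DecidableEq E] [DecidableEq T]
    (trip : P → T) (edges : P → Finset E) (c : E → ℝ → ℝ)
    (hc : ∀ e, Continuous (c e) ∧ Monotone (c e) ∧ ∀ x, 0 ≤ x → 0 ≤ c e x)
    (d : T → ℝ) (hd : ∀ t, 0 < d t) (hne : ∀ t, ∃ p, trip p = t)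
    (f : P → ℝ) (hf : Feasible trip d f) (ε : ℝ) (hε : 0 ≤ ε) :
    IsBRUE trip edges c ε f ↔
      ∀ g, Feasible trip d g →
        ∑ p, (f p - g p) * pathCost edges c f p ≤
          ε / 2 * ∑ p, |f p - g p| := by
  constructor
  · -- forward direction
    intro hB g hg
    rw [← Finset.sum_fiberwise univ trip (fun p => (f p - g p) * pathCost edges c f p),
        ← Finset.sum_fiberwise univ trip (fun p => |f p - g p|), Finset.mul_sum]
    apply Finset.sum_le_sum
    intro t _
    set s := univ.filter (fun p => trip p = t) with hs
    rcases s.eq_empty_or_nonempty with he | hne'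
    · simp [he]
    · obtain ⟨q, hq, hqmin⟩ := s.exists_min_image (pathCost edges c f) hne'
      apply aux_sum s _ _ ε (pathCost edges c f q)
      · rw [Finset.sum_sub_distrib, hf.2 t, hg.2 t, sub_self]
      · intro p hp hpos
        have hfp : 0 < f p := lt_of_le_of_lt (hg.1 p) (by linarith [sub_pos.mp hpos])
        have htp : trip p = trip q := by
          have h1 := (Finset.mem_filter.mp hp).2
          have h2 := (Finset.mem_filter.mp hq).2
          rw [h1, h2]
        exact hB p q htp hfp
      · intro p hp
        exact hqmin p hp
  · -- backward direction
    intro hV p q htpq hfp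
    classical
    by_cases hpq : p = q
    · subst hpq; linarith
    · set g : P → ℝ := fun r => if r = p then 0 else if r = q then f q + f p else f r with hg
      have hgfeas : Feasible trip d g := by
        constructor
        · intro r
          simp only [hg]
          split_ifs with h1 h2
          · exact le_refl 0
          · linarith [hf.1 q]
          · exact hf.1 r
        · intro t
          have hdiff : ∀ r, g r = f r + ((if r = q then f p else 0) - (if r = p then f p else 0)) := by
            intro r
            simp only [hg]
            by_cases h1 : r = p
            · subst h1
              simp [hpq]
            · by_cases h2 : r = q <;> simp [h1, h2, Ne.symm hpq]
          rw [Finset.sum_congr rfl (fun r _ => hdiff r), Finset.sum_add_distrib,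
            Finset.sum_sub_distrib, hf.2 t]
          simp only [Finset.sum_ite_eq' (univ.filter (fun r => trip r = t))]
          by_cases ht : trip p = t
          · simp [ht, htpq ▸ ht, ← htpq, ht]
          · have ht2 : ¬ trip q = t := fun h => ht (htpq.trans h)
            simp [ht, ht2]
      have := hV g hgfeas
      have h1 : ∀ r, f r - g r = (if r = p then f p else 0) - (if r = q then f p else 0) := by
        intro r
        simp only [hg]
        by_cases e1 : r = p
        · subst e1; simp [hpq]
        · by_cases e2 : r = q <;> simp [e1, e2, Ne.symm hpq]
      have hsum1 : ∑ r, (f r - g r) * pathCost edges c f r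
          = f p * pathCost edges c f p - f p * pathCost edges c f q := by
        rw [Finset.sum_congr rfl (fun r _ => by rw [h1 r, sub_mul])]
        rw [Finset.sum_sub_distrib]
        simp [Finset.sum_ite_eq', mul_comm]
      have hsum2 : ∑ r, |f r - g r| = 2 * f p := by
        have : ∀ r, |f r - g r| = (if r = p then f p else 0) + (if r = q then f p else 0) := by
          intro r
          rw [h1 r]
          by_cases e1 : r = p
          · subst e1
            simp [hpq, abs_of_nonneg hfp.le]
          · by_cases e2 : r = q <;>
              simp [e1, e2, Ne.symm hpq, abs_of_nonpos, hfp.le]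
        rw [Finset.sum_congr rfl (fun r _ => this r), Finset.sum_add_distrib]
        simp [Finset.sum_ite_eq']
        ring
      rw [hsum1, hsum2] at this
      have : f p * pathCost edges c f p ≤ f p * (pathCost edges c f q + ε) := by nlinarith
      exact le_of_mul_le_mul_left (by linarith [this]) hfp
end

section
/- If f is an ε-BRUE of a network, then the Beckmann potential satisfies Φ(f) ≤ Φ₀ + ‖d‖₁·ε, where Φ₀ is the minimum of Φ over feasible flows and ‖d‖₁ is the total demand. -/
open Finset

/-- Beckmann potential `Φ(g) = Σ_e ∫₀^{g_e} c_e`. -/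
noncomputable def beckmann {E P : Type} [Fintype E] [Fintype P] [DecidableEq E]
    (edges : P → Finset E) (c : E → ℝ → ℝ) (g : P → ℝ) : ℝ :=
  ∑ e, ∫ x in (0:ℝ)..(edgeFlow edges g e), c e x

lemma int_grad_ineq (c : ℝ → ℝ) (hcont : Continuous c) (hmono : Monotone c)
    (a b : ℝ) : (b - a) * c a ≤ ∫ x in a..b, c x := by
  rcases le_total a b with h | h
  · have : ∫ x in a..b, c a ≤ ∫ x in a..b, c x := by
      apply intervalIntegral.integral_mono_on h (intervalIntegrable_const)
        (hcont.intervalIntegrable a b)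
      exact fun x hx => hmono hx.1
    simpa [intervalIntegral.integral_const, smul_eq_mul] using this
  · have h1 : ∫ x in b..a, c x ≤ ∫ x in b..a, c a := by
      apply intervalIntegral.integral_mono_on h (hcont.intervalIntegrable b a)
        intervalIntegrable_const
      exact fun x hx => hmono hx.2
    rw [intervalIntegral.integral_const, smul_eq_mul] at h1
    rw [intervalIntegral.integral_symm]
    nlinarith

lemma swap_sum {E P : Type} [Fintype E] [Fintype P] [DecidableEq E]
    (edges : P → Finset E) (F : P → E → ℝ) :
    ∑ e : E, ∑ p ∈ univ.filter (fun p => e ∈ edges p), F p e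
      = ∑ p : P, ∑ e ∈ edges p, F p e := by
  simp_rw [Finset.sum_filter]
  rw [Finset.sum_comm]
  refine Finset.sum_congr rfl fun p _ => ?_
  rw [← Finset.sum_filter]
  congr 1
  ext e
  simp

/-- If `f` is an `ε`-BRUE then `Φ(f) ≤ Φ₀ + ‖d‖₁·ε`. -/
theorem stmt5 {E T P : Type} [Fintype E] [Fintype T] [Fintype P]
    [DecidableEq E] [DecidableEq T]
    (trip : P → T) (edges : P → Finset E) (c : E → ℝ → ℝ)
    (hc : ∀ e, Continuous (c e) ∧ Monotone (c e) ∧ ∀ x, 0 ≤ x → 0 ≤ c e x)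
    (d : T → ℝ) (hd : ∀ t, 0 < d t) (hne : ∀ t, ∃ p, trip p = t)
    (f : P → ℝ) (hf : Feasible trip d f) (ε : ℝ) (hε : 0 ≤ ε)
    (hBRUE : ∀ p q, trip p = trip q → 0 < f p →
      pathCost edges c f p ≤ pathCost edges c f q + ε) :
    ∀ g, Feasible trip d g →
      beckmann edges c f ≤ beckmann edges c g + (∑ t, d t) * ε := by
  intro g hg
  set F := edgeFlow edges f with hF
  set G := edgeFlow edges g with hG
  -- gradient inequality
  have key1 : ∑ e, (G e - F e) * c e (F e) ≤
      beckmann edges c g - beckmann edges c f := by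
    rw [beckmann, beckmann, ← Finset.sum_sub_distrib]
    apply Finset.sum_le_sum
    intro e _
    have hsplit : (∫ x in (0:ℝ)..(G e), c e x) - ∫ x in (0:ℝ)..(F e), c e x
        = ∫ x in (F e)..(G e), c e x := by
      exact intervalIntegral.integral_interval_sub_left
        ((hc e).1.intervalIntegrable _ _) ((hc e).1.intervalIntegrable _ _)
    rw [hsplit]
    exact int_grad_ineq (c e) (hc e).1 (hc e).2.1 (F e) (G e)
  -- rewrite gradient term as path sum
  have key2 : ∑ e, (G e - F e) * c e (F e)
      = ∑ p, (g p - f p) * pathCost edges c f p := by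
    have : ∀ e, (G e - F e) * c e (F e)
        = ∑ p ∈ univ.filter (fun p => e ∈ edges p), (g p - f p) * c e (F e) := by
      intro e
      rw [hG, hF, edgeFlow, edgeFlow, ← Finset.sum_sub_distrib, Finset.sum_mul]
    simp_rw [this]
    rw [swap_sum edges (fun p e => (g p - f p) * c e (F e))]
    refine Finset.sum_congr rfl fun p _ => ?_
    rw [pathCost, Finset.mul_sum]
  -- VI bound
  have key3 : ∑ p, (f p - g p) * pathCost edges c f p ≤ (∑ t, d t) * ε := by
    have hq : ∀ t : T, ∃ q, trip q = t ∧
        ∀ p, trip p = t → pathCost edges c f q ≤ pathCost edges c f p := by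
      intro t
      obtain ⟨p0, hp0⟩ := hne t
      obtain ⟨q, hq1, hq2⟩ := Finset.exists_min_image
        (univ.filter (fun p => trip p = t)) (pathCost edges c f)
        ⟨p0, by simp [hp0]⟩
      simp only [Finset.mem_filter, Finset.mem_univ, true_and] at hq1
      exact ⟨q, hq1, fun p hp => hq2 p (by simp [hp])⟩
    choose q hq1 hq2 using hq
    set m : T → ℝ := fun t => pathCost edges c f (q t) with hm
    have hfib : ∑ p, (f p - g p) * pathCost edges c f p
        = ∑ t, ∑ p ∈ univ.filter (fun p => trip p = t),
            (f p - g p) * pathCost edges c f p :=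
      (Finset.sum_fiberwise univ trip _).symm
    rw [hfib, Finset.sum_mul]
    apply Finset.sum_le_sum
    intro t _
    have h1 : ∑ p ∈ univ.filter (fun p => trip p = t), f p * pathCost edges c f p
        ≤ d t * (m t + ε) := by
      calc ∑ p ∈ univ.filter (fun p => trip p = t), f p * pathCost edges c f p
          ≤ ∑ p ∈ univ.filter (fun p => trip p = t), f p * (m t + ε) := by
            apply Finset.sum_le_sum
            intro p hp
            simp only [Finset.mem_filter, Finset.mem_univ, true_and] at hp
            rcases (hf.1 p).lt_or_eq with hpos | hzero
            · exact mul_le_mul_of_nonneg_left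
                (hBRUE p (q t) (by rw [hp, hq1 t]) hpos) hpos.le
            · simp [← hzero]
        _ = d t * (m t + ε) := by rw [← Finset.sum_mul, hf.2 t]
    have h2 : d t * m t
        ≤ ∑ p ∈ univ.filter (fun p => trip p = t), g p * pathCost edges c f p := by
      calc d t * m t
          = ∑ p ∈ univ.filter (fun p => trip p = t), g p * m t := by
            rw [← Finset.sum_mul, hg.2 t]
        _ ≤ ∑ p ∈ univ.filter (fun p => trip p = t), g p * pathCost edges c f p := by
            apply Finset.sum_le_sum
            intro p hp
            simp only [Finset.mem_filter, Finset.mem_univ, true_and] at hp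
            exact mul_le_mul_of_nonneg_left (hq2 t p hp) (hg.1 p)
    have : ∑ p ∈ univ.filter (fun p => trip p = t),
        (f p - g p) * pathCost edges c f p
        = (∑ p ∈ univ.filter (fun p => trip p = t), f p * pathCost edges c f p)
          - ∑ p ∈ univ.filter (fun p => trip p = t), g p * pathCost edges c f p := by
      rw [← Finset.sum_sub_distrib]
      exact Finset.sum_congr rfl fun p _ => by ring
    rw [this]
    nlinarith [hd t]
  have hneg : ∑ p, (g p - f p) * pathCost edges c f p
      = -∑ p, (f p - g p) * pathCost edges c f p := by
    rw [← Finset.sum_neg_distrib]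
    exact Finset.sum_congr rfl fun p _ => by ring
  rw [key2, hneg] at key1
  linarith
end

section
/- In the Wheatstone network with unit demand, consider paths U, M, D with path flows (g_U, g_M, g_D) summing to 1 and flow-dependent path costs c_U = x₁ + 1/2, c_M = x₁ + x₂, c_D = 1/2 + x₂, where x₁ = g_U + g_M is the flow on the first variable edge and x₂ = g_M + g_D the flow on the second. Then: (a) f = (1/2, 0, 1/2) is a user equilibrium with all path costs equal to 1 and social cost 1; (b) for g = (0, 1, 0), the path costs are (3/2, 2, 3/2), so ε(g) = 1/2 and Ψ(g) − Ψ(f) = 1 = 2·ε(g); (c) for every feasible flow h, Ψ(h) − Ψ(f) ≤ 2·ε(h). -/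
/-- Wheatstone network, unit demand, path flows `(u, m, w)` on up, middle,
down paths; `x₁ = u + m`, `x₂ = m + w` are the flows on the two variable
edges; path costs `c_U = x₁ + 1/2`, `c_M = x₁ + x₂`, `c_D = x₂ + 1/2`. -/
noncomputable def wcU (u m w : ℝ) : ℝ := (u + m) + 1/2
noncomputable def wcM (u m w : ℝ) : ℝ := (u + m) + (m + w)
noncomputable def wcD (u m w : ℝ) : ℝ := (m + w) + 1/2

/-- Social cost. -/
noncomputable def wPsi (u m w : ℝ) : ℝ := u * wcU u m w + m * wcM u m w + w * wcD u m w

/-- Feasible unit-demand flow. -/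
def wFeas (u m w : ℝ) : Prop := 0 ≤ u ∧ 0 ≤ m ∧ 0 ≤ w ∧ u + m + w = 1

/-- `(u,m,w)` is an `ε`-BRUE: every used path is at most `ε` longer than any
other path. -/
def wBRUE (ε u m w : ℝ) : Prop :=
  (0 < u → wcU u m w ≤ wcM u m w + ε ∧ wcU u m w ≤ wcD u m w + ε) ∧
  (0 < m → wcM u m w ≤ wcU u m w + ε ∧ wcM u m w ≤ wcD u m w + ε) ∧
  (0 < w → wcD u m w ≤ wcU u m w + ε ∧ wcD u m w ≤ wcM u m w + ε)

theorem stmt6 :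
    -- (a) f = (1/2, 0, 1/2) is a UE, all path costs 1, social cost 1
    (wFeas (1/2) 0 (1/2) ∧ wcU (1/2) 0 (1/2) = 1 ∧ wcM (1/2) 0 (1/2) = 1 ∧
      wcD (1/2) 0 (1/2) = 1 ∧ wBRUE 0 (1/2) 0 (1/2) ∧ wPsi (1/2) 0 (1/2) = 1) ∧
    -- (b) g = (0,1,0): costs (3/2, 2, 3/2), ε(g) = 1/2, Ψ(g) − Ψ(f) = 1 = 2·ε(g)
    (wcU 0 1 0 = 3/2 ∧ wcM 0 1 0 = 2 ∧ wcD 0 1 0 = 3/2 ∧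
      (∀ ε, wBRUE ε 0 1 0 ↔ 1/2 ≤ ε) ∧
      wPsi 0 1 0 - wPsi (1/2) 0 (1/2) = 1 ∧ (1:ℝ) = 2 * (1/2)) ∧
    -- (c) every feasible flow h satisfies Ψ(h) − Ψ(f) ≤ 2·ε(h)
    (∀ u m w ε, wFeas u m w → 0 ≤ ε → wBRUE ε u m w →
      wPsi u m w - wPsi (1/2) 0 (1/2) ≤ 2 * ε) := by

  refine ⟨⟨⟨by norm_num, by norm_num, by norm_num, by norm_num⟩, by norm_num [wcU],
    by norm_num [wcM], by norm_num [wcD],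
    ⟨fun _ => by norm_num [wcU, wcM, wcD], fun h => by norm_num at h,
      fun _ => by norm_num [wcU, wcM, wcD]⟩, by norm_num [wPsi, wcU, wcM, wcD]⟩,
    ⟨by norm_num [wcU], by norm_num [wcM], by norm_num [wcD], ?_,
      by norm_num [wPsi, wcU, wcM, wcD], by norm_num⟩, ?_⟩
  · intro ε
    constructor
    · intro h
      have := (h.2.1 (by norm_num)).1
      simp only [wcU, wcM] at this
      linarith
    · intro h
      refine ⟨fun h0 => by norm_num at h0, fun _ => ?_, fun h0 => by norm_num at h0⟩
      constructor <;> simp only [wcU, wcM, wcD] <;> linarith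
  · intro u m w ε ⟨hu, hm, hw, hs⟩ hε hb
    simp only [wBRUE, wcU, wcM, wcD] at hb
    simp only [wPsi, wcU, wcM, wcD]
    rcases eq_or_lt_of_le hm with hm0 | hm0
    · subst hm0
      rcases eq_or_lt_of_le hu with hu0 | hu0
      · have := (hb.2.2 (by nlinarith)).1
        nlinarith
      · rcases eq_or_lt_of_le hw with hw0 | hw0
        · have := (hb.1 hu0).2
          nlinarith
        · have h1 := (hb.1 hu0).2
          have h2 := (hb.2.2 hw0).1
          nlinarith [sq_nonneg (u - w)]
    · have h1 := (hb.2.1 hm0).1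
      have h2 := (hb.2.1 hm0).2
      nlinarith [mul_nonneg hu hε, mul_nonneg hw hε, mul_nonneg hm hε,
        mul_nonneg hu hm, mul_nonneg hw hm, mul_nonneg hu hw, sq_nonneg m]
end

section
/- For every network (fixed directed graph, continuous nondecreasing latencies, positive demands), there exists a constant M ≥ 0 such that for all feasible flows g, the average excess time ψ(g) = (Ψ(g) − Ψ₀)/‖d‖₁ satisfies ψ(g) ≤ M·ε(g), where Ψ₀ is the (common) social cost of user equilibria. -/
open Finset

/-- Social cost `Ψ(g) = Σ_P g_P c_P(g)`. -/
def socialCost {E P : Type} [Fintype P] [DecidableEq E]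
    (edges : P → Finset E) (c : E → ℝ → ℝ) (g : P → ℝ) : ℝ :=
  ∑ p, g p * pathCost edges c g p

/-- Threshold function `ε(g) = max{c_P(g) − c_Q(g) : trip t, P,Q ∈ P_t, g_P > 0}`. -/
noncomputable def epsFun {E T P : Type} [Fintype P] [DecidableEq E]
    (trip : P → T) (edges : P → Finset E) (c : E → ℝ → ℝ) (g : P → ℝ) : ℝ :=
  sSup {x | ∃ p q, trip p = trip q ∧ 0 < g p ∧
    x = pathCost edges c g p - pathCost edges c g q}

set_option linter.unusedSectionVars false


section Farkas

variable {V : Type*} [NormedAddCommGroup V] [InnerProductSpace ℝ V] [FiniteDimensional ℝ V]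
variable {ι : Type*} [Fintype ι] [DecidableEq ι]

/-- The conic hull of the vectors `a i`, `i ∈ σ`. -/
def coneSet (a : ι → V) (σ : Finset ι) : Set V :=
  {x | ∃ lam : ι → ℝ, (∀ i, 0 ≤ lam i) ∧ x = ∑ i ∈ σ, lam i • a i}

lemma coneSet_mono (a : ι → V) {σ τ : Finset ι} (h : σ ⊆ τ) :
    coneSet a σ ⊆ coneSet a τ := by
  rintro x ⟨lam, hlam, rfl⟩
  refine ⟨fun i => if i ∈ σ then lam i else 0,
    fun i => by dsimp only; split
                · exact hlam i
                · exact le_rfl, ?_⟩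
  rw [← Finset.sum_subset h
    (f := fun i => (if i ∈ σ then lam i else 0) • a i)
    (fun i _ hi => by simp [if_neg hi])]
  exact (Finset.sum_congr rfl fun i hi => by simp [if_pos hi]).symm

lemma isClosed_coneSet_of_li (a : ι → V) (σ : Finset ι)
    (h : LinearIndependent ℝ (fun i : σ => a i)) : IsClosed (coneSet a σ) := by
  classical
  -- the linear map sending coefficients to the combination
  let φ : (σ → ℝ) →ₗ[ℝ] V :=
    { toFun := fun lam => ∑ i : σ, lam i • a i
      map_add' := by
        intro x y; simp [add_smul, Finset.sum_add_distrib]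
      map_smul' := by
        intro r x; simp [smul_smul, Finset.smul_sum] }
  have hinj : LinearMap.ker φ = ⊥ := by
    rw [LinearMap.ker_eq_bot']
    intro m hm
    funext i
    exact Fintype.linearIndependent_iff.mp h m hm i
  have hce : Topology.IsClosedEmbedding φ := LinearMap.isClosedEmbedding_of_injective hinj
  have himage : coneSet a σ = φ '' {lam : σ → ℝ | ∀ i, 0 ≤ lam i} := by
    ext x
    constructor
    · rintro ⟨lam, hlam, rfl⟩
      refine ⟨fun i => lam i, fun i => hlam i, ?_⟩
      show ∑ i : σ, _ = _
      rw [← Finset.sum_attach σ (fun i => lam i • a i)]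
      rfl
    · rintro ⟨lam, hlam, rfl⟩
      refine ⟨fun i => if hi : i ∈ σ then lam ⟨i, hi⟩ else 0,
        fun i => by dsimp only; split
                    · exact hlam _
                    · exact le_rfl, ?_⟩
      show _ = ∑ i ∈ σ, _
      rw [← Finset.sum_attach σ (fun i => (if hi : i ∈ σ then lam ⟨i, hi⟩ else 0) • a i)]
      exact Finset.sum_congr rfl fun i _ => by rw [dif_pos i.2]
  rw [himage]
  apply hce.isClosedMap
  have : {lam : σ → ℝ | ∀ i, 0 ≤ lam i} = ⋂ i, {lam : σ → ℝ | 0 ≤ lam i} := by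
    ext; simp [Set.mem_iInter]
  rw [this]
  exact isClosed_iInter fun i => isClosed_le continuous_const (continuous_apply i)

end Farkas

section Farkas2
set_option linter.unusedSectionVars false
variable {V : Type*} [NormedAddCommGroup V] [InnerProductSpace ℝ V] [FiniteDimensional ℝ V]
variable {ι : Type*} [Fintype ι] [DecidableEq ι]

lemma isClosed_coneSet (a : ι → V) (σ : Finset ι) : IsClosed (coneSet a σ) := by
  classical
  induction σ using Finset.strongInduction with
  | _ σ ih =>
    by_cases h : LinearIndependent ℝ (fun i : σ => a i)
    · exact isClosed_coneSet_of_li a σ h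
    · obtain ⟨g, hgsum, i₀, hgi₀⟩ := Fintype.not_linearIndependent_iff.mp h
      -- extend g to ι, with the sign arranged so that some coefficient is positive
      have main : ∀ G : ι → ℝ, (∑ i ∈ σ, G i • a i = 0) → ∀ i₁, i₁ ∈ σ → 0 < G i₁ →
          IsClosed (coneSet a σ) := by
        intro G hGsum i₁ hi₁ hGi₁
        have hcover : coneSet a σ =
            ⋃ i ∈ (σ.filter fun j => 0 < G j), coneSet a (σ.erase i) := by
          apply Set.Subset.antisymm
          · rintro x ⟨lam, hlam, rfl⟩
            set S := σ.filter fun j => 0 < G j with hS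
            have hSne : S.Nonempty := ⟨i₁, Finset.mem_filter.mpr ⟨hi₁, hGi₁⟩⟩
            obtain ⟨j₀, hj₀S, hj₀min⟩ :=
              Finset.exists_min_image S (fun j => lam j / G j) hSne
            have hj₀σ : j₀ ∈ σ := (Finset.mem_filter.mp hj₀S).1
            have hGj₀ : 0 < G j₀ := (Finset.mem_filter.mp hj₀S).2
            set t := lam j₀ / G j₀ with ht
            have ht0 : 0 ≤ t := div_nonneg (hlam j₀) (le_of_lt hGj₀)
            have hlam' : ∀ i ∈ σ, 0 ≤ lam i - t * G i := by
              intro i hi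
              rcases le_or_gt (G i) 0 with hGi | hGi
              · nlinarith [hlam i]
              · have h1 := hj₀min i (Finset.mem_filter.mpr ⟨hi, hGi⟩)
                have h2 : t * G i ≤ lam i := by
                  rw [ht, div_mul_eq_mul_div, div_le_iff₀ hGj₀]
                  rw [ht, div_le_div_iff₀ hGj₀ hGi] at h1
                  linarith
                linarith
            refine Set.mem_biUnion hj₀S ?_
            refine ⟨fun i => if i ∈ σ.erase j₀ then lam i - t * G i else 0, ?_, ?_⟩
            · intro i; dsimp only; split
              · exact hlam' i (Finset.mem_of_mem_erase (by assumption))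
              · exact le_rfl
            · have e1 : ∑ i ∈ σ.erase j₀,
                  (if i ∈ σ.erase j₀ then lam i - t * G i else 0) • a i =
                  ∑ i ∈ σ.erase j₀, (lam i - t * G i) • a i :=
                Finset.sum_congr rfl fun i hi => by rw [if_pos hi]
              rw [e1]
              have e2 : ∑ i ∈ σ.erase j₀, (lam i - t * G i) • a i =
                  ∑ i ∈ σ, (lam i - t * G i) • a i := by
                apply Finset.sum_erase
                have : lam j₀ - t * G j₀ = 0 := by
                  rw [ht, div_mul_cancel₀ _ (ne_of_gt hGj₀), sub_self]
                rw [this, zero_smul]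
              rw [e2]
              have e3 : ∑ i ∈ σ, (lam i - t * G i) • a i =
                  (∑ i ∈ σ, lam i • a i) - t • (∑ i ∈ σ, G i • a i) := by
                rw [Finset.smul_sum, ← Finset.sum_sub_distrib]
                exact Finset.sum_congr rfl fun i _ => by
                  rw [sub_smul, smul_smul]
              rw [e3, hGsum] at *
              simp
          · intro x hx
            obtain ⟨i, hi, hx⟩ := Set.mem_iUnion₂.mp hx
            exact coneSet_mono a (Finset.erase_subset _ _) hx
        rw [hcover]
        apply Set.Finite.isClosed_biUnion (Finset.finite_toSet _)
        intro i hi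
        have hi' : i ∈ σ.filter fun j => 0 < G j := by exact_mod_cast hi
        exact ih _ (Finset.erase_ssubset (Finset.mem_filter.mp hi').1)
      set G : ι → ℝ := fun i => if h : i ∈ σ then g ⟨i, h⟩ else 0 with hG
      have hGsum : ∑ i ∈ σ, G i • a i = 0 := by
        rw [← Finset.sum_attach σ (fun i => G i • a i)]
        rw [← hgsum]
        exact Finset.sum_congr rfl fun i _ => by rw [hG]; simp [i.2]
      have hGsum' : ∑ i ∈ σ, (-G) i • a i = 0 := by
        have : ∑ i ∈ σ, (-G) i • a i = -∑ i ∈ σ, G i • a i := by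
          rw [← Finset.sum_neg_distrib]
          exact Finset.sum_congr rfl fun i _ => by simp
        rw [this, hGsum, neg_zero]
      rcases lt_trichotomy (g i₀) 0 with hlt | heq | hgt
      · refine main (-G) hGsum' i₀ i₀.2 ?_
        have : G (i₀ : ι) = g i₀ := by rw [hG]; simp [i₀.2]
        simp [this]; linarith
      · exact absurd heq hgi₀
      · refine main G hGsum i₀ i₀.2 ?_
        have : G (i₀ : ι) = g i₀ := by rw [hG]; simp [i₀.2]
        rw [this]; exact hgt

end Farkas2

section Farkas3
set_option linter.unusedSectionVars false
variable {V : Type*} [NormedAddCommGroup V] [InnerProductSpace ℝ V]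
  [FiniteDimensional ℝ V] [CompleteSpace V]
variable {ι : Type*} [Fintype ι] [DecidableEq ι]

open scoped InnerProductSpace in
theorem farkas (a : ι → V) (c : V)
    (hyp : ∀ y : V, (∀ i, ⟪a i, y⟫_ℝ ≤ 0) → ⟪c, y⟫_ℝ ≤ 0) :
    ∃ lam : ι → ℝ, (∀ i, 0 ≤ lam i) ∧ c = ∑ i, lam i • a i := by
  classical
  by_contra hc
  push_neg at hc
  have hcmem : c ∉ coneSet a univ := by
    rintro ⟨lam, hlam, rfl⟩
    exact (hc lam hlam) rfl
  set K : ConvexCone ℝ V :=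
    { carrier := coneSet a univ
      smul_mem' := by
        rintro r hr x ⟨lam, hlam, rfl⟩
        refine ⟨fun i => r * lam i, fun i => mul_nonneg (le_of_lt hr) (hlam i), ?_⟩
        rw [Finset.smul_sum]
        exact Finset.sum_congr rfl fun i _ => by
          dsimp only
          rw [smul_smul]
      add_mem' := by
        rintro x ⟨lam, hlam, rfl⟩ y ⟨lam', hlam', rfl⟩
        refine ⟨fun i => lam i + lam' i, fun i => add_nonneg (hlam i) (hlam' i), ?_⟩
        rw [← Finset.sum_add_distrib]
        exact Finset.sum_congr rfl fun i _ => (add_smul (lam i) (lam' i) (a i)).symm } with hK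
  have hKne : (K : Set V).Nonempty :=
    ⟨0, ⟨fun _ => 0, fun _ => le_rfl, by simp⟩⟩
  have hKcl : IsClosed (K : Set V) := isClosed_coneSet a univ
  have hKpt : K.Pointed := ⟨fun _ => 0, fun _ => le_rfl, by simp⟩
  obtain ⟨y, hy1, hy2⟩ :=
    ProperCone.hyperplane_separation' (E := V) (x₀ := c)
      ({ toSubmodule := K.toPointedCone hKpt, isClosed' := by exact hKcl } : ProperCone ℝ V) hcmem
  have hay : ∀ i, ⟪a i, -y⟫_ℝ ≤ 0 := by
    intro i
    have hmem : a i ∈ K := by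
      refine ⟨fun j => if j = i then 1 else 0, fun j => by positivity, ?_⟩
      simp
    have := hy1 _ hmem
    rw [inner_neg_right]
    linarith
  have := hyp (-y) hay
  rw [inner_neg_right] at this
  linarith

open scoped InnerProductSpace in
/-- If a linear functional `φ` is nonpositive on the part of the polyhedral cone
`{y : ∀ i, ⟪a i, y⟫ ≤ 0}` where `⟪εv, y⟫ ≤ 0`, then on the whole cone it is
bounded by a fixed multiple of `⟪εv, y⟫`. -/
theorem cone_bound (a : ι → V) (εv φ : V)
    (rig : ∀ y : V, (∀ i, ⟪a i, y⟫_ℝ ≤ 0) → ⟪εv, y⟫_ℝ ≤ 0 → ⟪φ, y⟫_ℝ ≤ 0) :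
    ∃ C : ℝ, 0 ≤ C ∧ ∀ y : V, (∀ i, ⟪a i, y⟫_ℝ ≤ 0) →
      ⟪φ, y⟫_ℝ ≤ C * ⟪εv, y⟫_ℝ := by
  classical
  obtain ⟨lam, hlam, heq⟩ := farkas (Sum.elim a (fun _ : Unit => εv)) φ
    (fun y hy => rig y (fun i => hy (.inl i)) (hy (.inr ())))
  refine ⟨lam (.inr ()), hlam _, fun y hy => ?_⟩
  have hφ : ⟪φ, y⟫_ℝ = ∑ i, lam i * ⟪(Sum.elim a fun _ => εv) i, y⟫_ℝ := by
    rw [heq, sum_inner]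
    exact Finset.sum_congr rfl fun i _ => real_inner_smul_left _ _ _
  rw [hφ, Fintype.sum_sum_type]
  have h1 : ∑ i : ι, lam (Sum.inl i) * ⟪Sum.elim a (fun _ : Unit => εv) (Sum.inl i), y⟫_ℝ ≤ 0 := by
    apply Finset.sum_nonpos
    intro i _
    have hle : ⟪Sum.elim a (fun _ : Unit => εv) (Sum.inl i), y⟫_ℝ ≤ 0 := by
      simpa using hy i
    exact mul_nonpos_of_nonneg_of_nonpos (hlam _) hle
  have h2 : ∑ u : Unit, lam (Sum.inr u) * ⟪Sum.elim a (fun _ : Unit => εv) (Sum.inr u), y⟫_ℝ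
      = lam (.inr ()) * ⟪εv, y⟫_ℝ := by simp
  linarith

end Farkas3

section App
set_option linter.unusedSectionVars false
set_option maxHeartbeats 1000000

variable {E T P : Type} [Fintype E] [Fintype T] [Fintype P]
  [DecidableEq E] [DecidableEq T] [DecidableEq P]

-- coordinate index type: u-block, s-block, ρ-block, Δ-block, ε
abbrev KIdx (E T P : Type) := (P ⊕ P) ⊕ ((T ⊕ E) ⊕ Unit)

abbrev VSp (E T P : Type) [Fintype E] [Fintype T] [Fintype P] :=
  EuclideanSpace ℝ (KIdx E T P)

variable (E T P) in
def ku (p : P) : KIdx E T P := .inl (.inl p)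
variable (E T P) in
def ks (p : P) : KIdx E T P := .inl (.inr p)
variable (E T P) in
def kr (t : T) : KIdx E T P := .inr (.inl (.inl t))
variable (E T P) in
def kD (e : E) : KIdx E T P := .inr (.inl (.inr e))
variable (E T P) in
def ke : KIdx E T P := .inr (.inr ())

noncomputable def sing (k : KIdx E T P) : VSp E T P :=
  EuclideanSpace.single k (1 : ℝ)

open scoped InnerProductSpace in
lemma inner_sing (k : KIdx E T P) (y : VSp E T P) :
    ⟪sing k, y⟫_ℝ = y k := by
  simp [sing, EuclideanSpace.inner_single_left]

/-- The "consistency" constraint vector for a path `p`. -/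
noncomputable def consVec (trip : P → T) (edges : P → Finset E) (p : P) : VSp E T P :=
  (∑ e ∈ edges p, sing (kD E T P e)) - sing (ku E T P p) + sing (ks E T P p)
    - sing (kr E T P (trip p))

open scoped InnerProductSpace in
lemma inner_consVec (trip : P → T) (edges : P → Finset E) (p : P) (y : VSp E T P) :
    ⟪consVec trip edges p, y⟫_ℝ =
      (∑ e ∈ edges p, y (kD E T P e)) - y (ku E T P p) + y (ks E T P p)
        - y (kr E T P (trip p)) := by
  simp only [consVec, inner_sub_left, inner_add_left, sum_inner, inner_sing]

/-- Constraint index type. -/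
abbrev JIdx (E P : Type) := (P × Fin 6) ⊕ (E × Fin 4)

/-- The constraint vectors of the polyhedral cone attached to a pattern
`(Us, Fs, Pos, Negs)`. -/
noncomputable def aVec (trip : P → T) (edges : P → Finset E)
    (Us Fs : Finset P) (Pos Negs : Finset E) : JIdx E P → VSp E T P
  | .inl (p, ⟨0, _⟩) => -sing (ku E T P p)
  | .inl (p, ⟨1, _⟩) => if p ∈ Us then sing (ku E T P p) - sing (ke E T P) else 0
  | .inl (p, ⟨2, _⟩) => -sing (ks E T P p)
  | .inl (p, ⟨3, _⟩) => if p ∈ Fs then sing (ks E T P p) else 0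
  | .inl (p, ⟨4, _⟩) => consVec trip edges p
  | .inl (p, ⟨5, _⟩) => -consVec trip edges p
  | .inr (e, ⟨0, _⟩) => if e ∈ Pos then -sing (kD E T P e) else 0
  | .inr (e, ⟨1, _⟩) => if e ∈ Negs then sing (kD E T P e) else 0
  | .inr (e, ⟨2, _⟩) => if e ∈ Pos ∨ e ∈ Negs then 0 else sing (kD E T P e)
  | .inr (e, ⟨3, _⟩) => if e ∈ Pos ∨ e ∈ Negs then 0 else -sing (kD E T P e)

/-- A pattern is *realizable* if some within-trip circulation `z` witnesses it. -/
def GoodPat (trip : P → T) (edges : P → Finset E)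
    (Us Fs : Finset P) (Pos Negs : Finset E) : Prop :=
  ∃ z : P → ℝ,
    (∀ t, ∑ p ∈ univ.filter (fun p => trip p = t), z p = 0) ∧
    (∀ p, 0 < z p → p ∈ Us) ∧
    (∀ p, z p < 0 → p ∈ Fs) ∧
    (∀ e, e ∈ Pos ↔ 0 < ∑ p ∈ univ.filter (fun p => e ∈ edges p), z p) ∧
    (∀ e, e ∈ Negs ↔ ∑ p ∈ univ.filter (fun p => e ∈ edges p), z p < 0)

open scoped InnerProductSpace in
/-- Rigidity: on the part of the pattern cone where `ε ≤ 0`, the objective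
`u_p + ρ_{trip p}` is nonpositive for every `p ∈ Fs`. -/
lemma rigidity (trip : P → T) (edges : P → Finset E)
    (Us Fs : Finset P) (Pos Negs : Finset E)
    (hGood : GoodPat trip edges Us Fs Pos Negs) (p₀ : P) (hp₀ : p₀ ∈ Fs)
    (y : VSp E T P)
    (hy : ∀ j, ⟪aVec trip edges Us Fs Pos Negs j, y⟫_ℝ ≤ 0)
    (hε : ⟪sing (ke E T P), y⟫_ℝ ≤ 0) :
    ⟪sing (ku E T P p₀) + sing (kr E T P (trip p₀)), y⟫_ℝ ≤ 0 := by
  obtain ⟨z, hz1, hz2, hz3, hz4, hz5⟩ := hGood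
  set u : P → ℝ := fun p => y (ku E T P p) with hu_def
  set s : P → ℝ := fun p => y (ks E T P p) with hs_def
  set r : T → ℝ := fun t => y (kr E T P t) with hr_def
  set Δ : E → ℝ := fun e => y (kD E T P e) with hD_def
  have hev : y (ke E T P) ≤ 0 := by rwa [inner_sing] at hε
  -- unpack the constraints
  have hu0 : ∀ p, 0 ≤ u p := by
    intro p
    have := hy (.inl (p, ⟨0, by norm_num⟩))
    simp only [aVec, inner_neg_left, inner_sing] at this
    linarith
  have huU : ∀ p ∈ Us, u p ≤ y (ke E T P) := by
    intro p hp
    have := hy (.inl (p, ⟨1, by norm_num⟩))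
    simp only [aVec, if_pos hp, inner_sub_left, inner_sing] at this
    linarith
  have hs0 : ∀ p, 0 ≤ s p := by
    intro p
    have := hy (.inl (p, ⟨2, by norm_num⟩))
    simp only [aVec, inner_neg_left, inner_sing] at this
    linarith
  have hsF : ∀ p ∈ Fs, s p = 0 := by
    intro p hp
    have := hy (.inl (p, ⟨3, by norm_num⟩))
    simp only [aVec, if_pos hp, inner_sing] at this
    have := hs0 p
    linarith
  have hcons : ∀ p, ∑ e ∈ edges p, Δ e = u p - s p + r (trip p) := by
    intro p
    have h1 := hy (.inl (p, ⟨4, by norm_num⟩))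
    have h2 := hy (.inl (p, ⟨5, by norm_num⟩))
    simp only [aVec, inner_neg_left, inner_consVec] at h1 h2
    have : (∑ e ∈ edges p, y (kD E T P e)) - y (ku E T P p) + y (ks E T P p)
        - y (kr E T P (trip p)) = 0 := by linarith
    simp only [hu_def, hs_def, hr_def, hD_def]
    linarith [this]
  have hPos : ∀ e ∈ Pos, 0 ≤ Δ e := by
    intro e he
    have := hy (.inr (e, ⟨0, by norm_num⟩))
    simp only [aVec, if_pos he, inner_neg_left, inner_sing] at this
    linarith
  have hNeg : ∀ e ∈ Negs, Δ e ≤ 0 := by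
    intro e he
    have := hy (.inr (e, ⟨1, by norm_num⟩))
    simp only [aVec, if_pos he, inner_sing] at this
    linarith
  have hZer : ∀ e, ¬(e ∈ Pos ∨ e ∈ Negs) → Δ e = 0 := by
    intro e he
    have h1 := hy (.inr (e, ⟨2, by norm_num⟩))
    have h2 := hy (.inr (e, ⟨3, by norm_num⟩))
    simp only [aVec, if_neg he, inner_neg_left, inner_sing] at h1 h2
    linarith
  -- the key balanced sum
  set zE : E → ℝ := fun e => ∑ p ∈ univ.filter (fun p => e ∈ edges p), z p with hzE_def
  have hswap : ∑ e, zE e * Δ e = ∑ p, z p * (∑ e ∈ edges p, Δ e) := by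
    simp only [hzE_def, Finset.sum_mul]
    rw [Finset.sum_comm' (s := univ) (t := fun e => univ.filter (fun p => e ∈ edges p))
      (t' := univ) (s' := fun p => edges p) ?_]
    · exact Finset.sum_congr rfl fun p _ => by rw [Finset.mul_sum]
    · intro e p
      simp only [Finset.mem_filter, Finset.mem_univ, true_and, and_comm]
  have hsum_le : ∑ e, zE e * Δ e ≤ 0 := by
    rw [hswap]
    have hexpand : ∑ p, z p * (∑ e ∈ edges p, Δ e) =
        (∑ p, z p * u p) - (∑ p, z p * s p) + ∑ p, z p * r (trip p) := by
      have e1 : ∑ p, z p * (∑ e ∈ edges p, Δ e) =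
          ∑ p, (z p * u p - z p * s p + z p * r (trip p)) :=
        Finset.sum_congr rfl fun p _ => by rw [hcons p]; ring
      rw [e1, Finset.sum_add_distrib, Finset.sum_sub_distrib]
    have hr0 : ∑ p, z p * r (trip p) = 0 := by
      rw [← Finset.sum_fiberwise univ trip (fun p => z p * r (trip p))]
      refine Finset.sum_eq_zero fun t _ => ?_
      have : ∑ p ∈ univ.filter (fun p => trip p = t), z p * r (trip p) =
          ∑ p ∈ univ.filter (fun p => trip p = t), z p * r t :=
        Finset.sum_congr rfl fun p hp => by rw [(Finset.mem_filter.mp hp).2]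
      rw [this, ← Finset.sum_mul, hz1 t, zero_mul]
    have hzu : ∑ p, z p * u p ≤ 0 := by
      apply Finset.sum_nonpos
      intro p _
      rcases lt_trichotomy (z p) 0 with hz | hz | hz
      · nlinarith [hu0 p]
      · simp [hz]
      · have h1 : u p ≤ 0 := le_trans (huU p (hz2 p hz)) hev
        nlinarith
    have hzs : 0 ≤ ∑ p, z p * s p := by
      apply Finset.sum_nonneg
      intro p _
      rcases lt_trichotomy (z p) 0 with hz | hz | hz
      · rw [hsF p (hz3 p hz)]; simp
      · simp [hz]
      · nlinarith [hs0 p]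
    rw [hexpand, hr0]
    linarith
  have hterm : ∀ e ∈ (univ : Finset E), 0 ≤ zE e * Δ e := by
    intro e _
    by_cases he : e ∈ Pos
    · exact mul_nonneg (le_of_lt ((hz4 e).mp he)) (hPos e he)
    · by_cases he' : e ∈ Negs
      · have h1 := le_of_lt ((hz5 e).mp he')
        have h2 := hNeg e he'
        nlinarith
      · rw [hZer e (by tauto), mul_zero]
  have hall0 : ∀ e ∈ (univ : Finset E), zE e * Δ e = 0 := by
    intro e he
    have hsum0 : ∑ e, zE e * Δ e = 0 :=
      le_antisymm hsum_le (Finset.sum_nonneg hterm)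
    exact (Finset.sum_eq_zero_iff_of_nonneg hterm).mp hsum0 e he
  have hΔ0 : ∀ e, Δ e = 0 := by
    intro e
    by_cases he : e ∈ Pos
    · have hz := (hz4 e).mp he
      have := hall0 e (Finset.mem_univ e)
      rcases mul_eq_zero.mp this with h | h
      · exact absurd h (ne_of_gt hz)
      · exact h
    · by_cases he' : e ∈ Negs
      · have hz := (hz5 e).mp he'
        have := hall0 e (Finset.mem_univ e)
        rcases mul_eq_zero.mp this with h | h
        · exact absurd h (ne_of_lt hz)
        · exact h
      · exact hZer e (by tauto)
  -- conclude
  have hc := hcons p₀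
  have hΔsum : ∑ e ∈ edges p₀, Δ e = 0 :=
    Finset.sum_eq_zero fun e _ => hΔ0 e
  have hs₀ : s p₀ = 0 := hsF p₀ hp₀
  rw [inner_add_left, inner_sing, inner_sing]
  have : u p₀ + r (trip p₀) = 0 := by
    rw [hΔsum, hs₀] at hc
    linarith
  simp only [hu_def, hr_def] at this
  linarith [this]

end App

section Aux
set_option linter.unusedSectionVars false
variable {E T P : Type} [Fintype E] [Fintype T] [Fintype P] [DecidableEq E] [DecidableEq T]

lemma eps_bdd (trip : P → T) (edges : P → Finset E) (c : E → ℝ → ℝ) (g : P → ℝ) :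
    BddAbove {x | ∃ p q, trip p = trip q ∧ 0 < g p ∧
      x = pathCost edges c g p - pathCost edges c g q} := by
  refine BddAbove.mono ?_ (Set.finite_range
    (fun pq : P × P => pathCost edges c g pq.1 - pathCost edges c g pq.2)).bddAbove
  rintro x ⟨p, q, -, -, rfl⟩
  exact ⟨(p, q), rfl⟩

lemma eps_ge (trip : P → T) (edges : P → Finset E) (c : E → ℝ → ℝ) (g : P → ℝ)
    (p q : P) (hpq : trip p = trip q) (hp : 0 < g p) :
    pathCost edges c g p - pathCost edges c g q ≤ epsFun trip edges c g :=
  le_csSup (eps_bdd trip edges c g) ⟨p, q, hpq, hp, rfl⟩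

lemma eps_nonneg (trip : P → T) (edges : P → Finset E) (c : E → ℝ → ℝ) (g : P → ℝ)
    (p : P) (hp : 0 < g p) : 0 ≤ epsFun trip edges c g := by
  have := eps_ge trip edges c g p p rfl hp
  simpa using this

lemma exists_pos_path (trip : P → T) (d : T → ℝ) (hd : ∀ t, 0 < d t)
    (g : P → ℝ) (hg : Feasible trip d g) (t : T) :
    ∃ p, trip p = t ∧ 0 < g p := by
  have hsum : ∑ p ∈ univ.filter (fun p => trip p = t), (0:ℝ) <
      ∑ p ∈ univ.filter (fun p => trip p = t), g p := by
    rw [hg.2 t]; simpa using hd t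
  obtain ⟨p, hp1, hp2⟩ := Finset.exists_lt_of_sum_lt hsum
  exact ⟨p, (Finset.mem_filter.mp hp1).2, hp2⟩

end Aux


section Crux
set_option linter.unusedSectionVars false
set_option maxHeartbeats 1000000
open scoped InnerProductSpace

variable {E T P : Type} [Fintype E] [Fintype T] [Fintype P]
  [DecidableEq E] [DecidableEq T] [DecidableEq P]

lemma crux (trip : P → T) (edges : P → Finset E) (c : E → ℝ → ℝ)
    (hc : ∀ e, Continuous (c e) ∧ Monotone (c e) ∧ ∀ x, 0 ≤ x → 0 ≤ c e x)
    (d : T → ℝ) (hd : ∀ t, 0 < d t) (hne : ∀ t, ∃ p, trip p = t) :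
    ∃ C : ℝ, 0 ≤ C ∧ ∀ f g : P → ℝ, Feasible trip d f →
      (∀ p q, trip p = trip q → 0 < f p →
        pathCost edges c f p ≤ pathCost edges c f q) →
      Feasible trip d g → ∀ p, 0 < f p →
      pathCost edges c g p - pathCost edges c f p ≤ C * epsFun trip edges c g := by
  classical
  have key : ∀ (Us Fs : Finset P) (Pos Negs : Finset E) (p : P), ∃ C : ℝ, 0 ≤ C ∧
      (GoodPat trip edges Us Fs Pos Negs → p ∈ Fs → ∀ y : VSp E T P,
        (∀ j, ⟪aVec trip edges Us Fs Pos Negs j, y⟫_ℝ ≤ 0) →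
        ⟪sing (ku E T P p) + sing (kr E T P (trip p)), y⟫_ℝ ≤
          C * ⟪sing (ke E T P), y⟫_ℝ) := by
    intro Us Fs Pos Negs p
    by_cases h : GoodPat trip edges Us Fs Pos Negs ∧ p ∈ Fs
    · obtain ⟨C, hC0, hCb⟩ := cone_bound (aVec trip edges Us Fs Pos Negs)
        (sing (ke E T P)) (sing (ku E T P p) + sing (kr E T P (trip p)))
        (fun y hy hε => rigidity trip edges Us Fs Pos Negs h.1 p h.2 y hy hε)
      exact ⟨C, hC0, fun _ _ y hy => hCb y hy⟩
    · exact ⟨0, le_rfl, fun hG hp => absurd ⟨hG, hp⟩ h⟩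
  choose Cf hCf0 hCfB using key
  set Cbig : ℝ := ∑ q : Finset P × Finset P × Finset E × Finset E × P,
      Cf q.1 q.2.1 q.2.2.1 q.2.2.2.1 q.2.2.2.2 with hCbig
  have hCbig0 : 0 ≤ Cbig := Finset.sum_nonneg fun q _ => hCf0 _ _ _ _ _
  have hCle : ∀ Us Fs Pos Negs p, Cf Us Fs Pos Negs p ≤ Cbig := by
    intro Us Fs Pos Negs p
    exact Finset.single_le_sum (f := fun q : Finset P × Finset P × Finset E × Finset E × P =>
        Cf q.1 q.2.1 q.2.2.1 q.2.2.2.1 q.2.2.2.2)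
      (fun q _ => hCf0 _ _ _ _ _) (Finset.mem_univ (Us, Fs, Pos, Negs, p))
  refine ⟨Cbig, hCbig0, ?_⟩
  intro f g hf hWf hg p₀ hfp₀
  have hmin : ∀ (h : P → ℝ) (t : T), ∃ q ∈ univ.filter (fun p => trip p = t),
      ∀ p ∈ univ.filter (fun p => trip p = t),
        pathCost edges c h q ≤ pathCost edges c h p := by
    intro h t
    obtain ⟨p, hp⟩ := hne t
    exact Finset.exists_min_image _ _ ⟨p, Finset.mem_filter.mpr ⟨Finset.mem_univ p, hp⟩⟩
  choose qf hqfm hqfmin using hmin f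
  choose qg hqgm hqgmin using hmin g
  have hqft : ∀ t, trip (qf t) = t := fun t => (Finset.mem_filter.mp (hqfm t)).2
  have hqgt : ∀ t, trip (qg t) = t := fun t => (Finset.mem_filter.mp (hqgm t)).2
  set lam : T → ℝ := fun t => pathCost edges c f (qf t) with hlam
  set mu : T → ℝ := fun t => pathCost edges c g (qg t) with hmu
  set ε := epsFun trip edges c g with hεd
  have hlam_le : ∀ p, lam (trip p) ≤ pathCost edges c f p := fun p =>
    hqfmin (trip p) p (Finset.mem_filter.mpr ⟨Finset.mem_univ p, rfl⟩)
  have hmu_le : ∀ p, mu (trip p) ≤ pathCost edges c g p := fun p =>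
    hqgmin (trip p) p (Finset.mem_filter.mpr ⟨Finset.mem_univ p, rfl⟩)
  set y₀ : VSp E T P := WithLp.toLp 2 (fun k => match k with
    | .inl (.inl p) => pathCost edges c g p - mu (trip p)
    | .inl (.inr p) => pathCost edges c f p - lam (trip p)
    | .inr (.inl (.inl t)) => mu t - lam t
    | .inr (.inl (.inr e)) => c e (edgeFlow edges g e) - c e (edgeFlow edges f e)
    | .inr (.inr _) => ε) with hy₀
  have ec1 : ∀ p, y₀ (ku E T P p) = pathCost edges c g p - mu (trip p) := fun p => rfl
  have ec2 : ∀ p, y₀ (ks E T P p) = pathCost edges c f p - lam (trip p) := fun p => rfl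
  have ec3 : ∀ t, y₀ (kr E T P t) = mu t - lam t := fun t => rfl
  have ec4 : ∀ e, y₀ (kD E T P e) =
      c e (edgeFlow edges g e) - c e (edgeFlow edges f e) := fun e => rfl
  have ec5 : y₀ (ke E T P) = ε := rfl
  set Us : Finset P := univ.filter (fun p => 0 < g p) with hUs
  set Fs : Finset P := univ.filter (fun p => 0 < f p) with hFs
  set Pos : Finset E := univ.filter (fun e => edgeFlow edges f e < edgeFlow edges g e) with hPos
  set Negs : Finset E := univ.filter (fun e => edgeFlow edges g e < edgeFlow edges f e) with hNegs
  have hGood : GoodPat trip edges Us Fs Pos Negs := by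
    refine ⟨fun p => g p - f p, ?_, ?_, ?_, ?_, ?_⟩
    · intro t
      rw [Finset.sum_sub_distrib, hg.2 t, hf.2 t, sub_self]
    · intro p hp
      dsimp only at hp
      exact Finset.mem_filter.mpr ⟨Finset.mem_univ p, by linarith [hf.1 p]⟩
    · intro p hp
      dsimp only at hp
      exact Finset.mem_filter.mpr ⟨Finset.mem_univ p, by linarith [hg.1 p]⟩
    · intro e
      rw [hPos, Finset.mem_filter]
      rw [Finset.sum_sub_distrib]
      constructor
      · rintro ⟨-, h⟩; simp only [edgeFlow] at h; linarith
      · intro h; refine ⟨Finset.mem_univ e, ?_⟩; simp only [edgeFlow]; linarith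
    · intro e
      rw [hNegs, Finset.mem_filter]
      rw [Finset.sum_sub_distrib]
      constructor
      · rintro ⟨-, h⟩; simp only [edgeFlow] at h; linarith
      · intro h; refine ⟨Finset.mem_univ e, ?_⟩; simp only [edgeFlow]; linarith
  have hΔpath : ∀ p, ∑ e ∈ edges p,
      (c e (edgeFlow edges g e) - c e (edgeFlow edges f e)) =
      pathCost edges c g p - pathCost edges c f p := by
    intro p
    rw [pathCost, pathCost, ← Finset.sum_sub_distrib]
  have hyJ : ∀ j, ⟪aVec trip edges Us Fs Pos Negs j, y₀⟫_ℝ ≤ 0 := by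
    rintro (⟨p, i⟩ | ⟨e, i⟩)
    · fin_cases i
      · simp only [aVec, inner_neg_left, inner_sing, ec1]
        linarith [hmu_le p]
      · by_cases hp : p ∈ Us
        · simp only [aVec, if_pos hp, inner_sub_left, inner_sing, ec1, ec5]
          have hgp : 0 < g p := (Finset.mem_filter.mp hp).2
          have htr : trip p = trip (qg (trip p)) := (hqgt (trip p)).symm
          have := eps_ge trip edges c g p (qg (trip p)) htr hgp
          rw [← hεd] at this
          simp only [hmu]
          linarith
        · simp only [aVec, if_neg hp, inner_zero_left, le_refl]
      · simp only [aVec, inner_neg_left, inner_sing, ec2]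
        linarith [hlam_le p]
      · by_cases hp : p ∈ Fs
        · simp only [aVec, if_pos hp, inner_sing, ec2]
          have hfp : 0 < f p := (Finset.mem_filter.mp hp).2
          have htr : trip p = trip (qf (trip p)) := (hqft (trip p)).symm
          have := hWf p (qf (trip p)) htr hfp
          simp only [hlam]
          linarith
        · simp only [aVec, if_neg hp, inner_zero_left, le_refl]
      · simp only [aVec, inner_consVec, ec1, ec2, ec3, ec4]
        rw [hΔpath p]
        linarith
      · simp only [aVec, inner_neg_left, inner_consVec, ec1, ec2, ec3, ec4]
        rw [hΔpath p]
        linarith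
    · fin_cases i
      · by_cases he : e ∈ Pos
        · simp only [aVec, if_pos he, inner_neg_left, inner_sing, ec4]
          have hlt : edgeFlow edges f e < edgeFlow edges g e := (Finset.mem_filter.mp he).2
          have := (hc e).2.1 (le_of_lt hlt)
          linarith
        · simp only [aVec, if_neg he, inner_zero_left, le_refl]
      · by_cases he : e ∈ Negs
        · simp only [aVec, if_pos he, inner_sing, ec4]
          have hlt : edgeFlow edges g e < edgeFlow edges f e := (Finset.mem_filter.mp he).2
          have := (hc e).2.1 (le_of_lt hlt)
          linarith
        · simp only [aVec, if_neg he, inner_zero_left, le_refl]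
      · by_cases he : e ∈ Pos ∨ e ∈ Negs
        · simp only [aVec, if_pos he, inner_zero_left, le_refl]
        · push_neg at he
          have h1 : ¬ edgeFlow edges f e < edgeFlow edges g e := fun h =>
            he.1 (Finset.mem_filter.mpr ⟨Finset.mem_univ e, h⟩)
          have h2 : ¬ edgeFlow edges g e < edgeFlow edges f e := fun h =>
            he.2 (Finset.mem_filter.mpr ⟨Finset.mem_univ e, h⟩)
          have heq : edgeFlow edges f e = edgeFlow edges g e := le_antisymm (not_lt.mp h2) (not_lt.mp h1)
          have : (e ∈ Pos ∨ e ∈ Negs) = False := by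
            simp only [eq_iff_iff, iff_false]; tauto
          simp only [aVec, this, if_false, inner_sing, ec4, heq, sub_self, le_refl]
      · by_cases he : e ∈ Pos ∨ e ∈ Negs
        · simp only [aVec, if_pos he, inner_zero_left, le_refl]
        · push_neg at he
          have h1 : ¬ edgeFlow edges f e < edgeFlow edges g e := fun h =>
            he.1 (Finset.mem_filter.mpr ⟨Finset.mem_univ e, h⟩)
          have h2 : ¬ edgeFlow edges g e < edgeFlow edges f e := fun h =>
            he.2 (Finset.mem_filter.mpr ⟨Finset.mem_univ e, h⟩)
          have heq : edgeFlow edges f e = edgeFlow edges g e := le_antisymm (not_lt.mp h2) (not_lt.mp h1)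
          have : (e ∈ Pos ∨ e ∈ Negs) = False := by
            simp only [eq_iff_iff, iff_false]; tauto
          simp only [aVec, this, if_false, inner_neg_left, inner_sing, ec4, heq, sub_self,
            neg_zero, le_refl]
  -- assemble
  have hp₀Fs : p₀ ∈ Fs := Finset.mem_filter.mpr ⟨Finset.mem_univ p₀, hfp₀⟩
  have hlam₀ : lam (trip p₀) = pathCost edges c f p₀ := by
    refine le_antisymm (hlam_le p₀) ?_
    have htr : trip p₀ = trip (qf (trip p₀)) := (hqft (trip p₀)).symm
    exact hWf p₀ (qf (trip p₀)) htr hfp₀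
  have hφ : ⟪sing (ku E T P p₀) + sing (kr E T P (trip p₀)), y₀⟫_ℝ =
      pathCost edges c g p₀ - pathCost edges c f p₀ := by
    rw [inner_add_left, inner_sing, inner_sing, ec1, ec3, ← hlam₀]
    ring
  have hεinner : ⟪sing (ke E T P), y₀⟫_ℝ = ε := by rw [inner_sing, ec5]
  have happ := hCfB Us Fs Pos Negs p₀ hGood hp₀Fs y₀ hyJ
  rw [hφ, hεinner] at happ
  obtain ⟨pp, -, hpp⟩ := exists_pos_path trip d hd g hg (trip p₀)
  have hε0 : 0 ≤ ε := eps_nonneg trip edges c g pp hpp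
  calc pathCost edges c g p₀ - pathCost edges c f p₀
      ≤ Cf Us Fs Pos Negs p₀ * ε := happ
    _ ≤ Cbig * ε := mul_le_mul_of_nonneg_right (hCle _ _ _ _ _) hε0

end Crux

/-- For every network there is `M ≥ 0` such that the average excess time
satisfies `ψ(g) ≤ M·ε(g)` for all feasible `g`, where `Ψ₀` is the (common)
social cost of user equilibria `f`. -/
theorem stmt7 {E T P : Type} [Fintype E] [Fintype T] [Fintype P]
    [DecidableEq E] [DecidableEq T]
    (trip : P → T) (edges : P → Finset E) (c : E → ℝ → ℝ)
    (hc : ∀ e, Continuous (c e) ∧ Monotone (c e) ∧ ∀ x, 0 ≤ x → 0 ≤ c e x)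
    (d : T → ℝ) (hd : ∀ t, 0 < d t) (hne : ∀ t, ∃ p, trip p = t) :
    ∃ M : ℝ, 0 ≤ M ∧
      ∀ f g, Feasible trip d f →
        (∀ p q, trip p = trip q → 0 < f p →
          pathCost edges c f p ≤ pathCost edges c f q) →
        Feasible trip d g →
        (socialCost edges c g - socialCost edges c f) / (∑ t, d t) ≤
          M * epsFun trip edges c g := by
  classical
  rcases isEmpty_or_nonempty T with hT | hT
  · -- no trips at all: everything degenerates
    refine ⟨0, le_rfl, ?_⟩
    intro f g hf hWf hg
    have hP : IsEmpty P := ⟨fun p => hT.false (trip p)⟩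
    have h1 : socialCost edges c g = 0 := by
      simp [socialCost, Finset.univ_eq_empty]
    have h2 : socialCost edges c f = 0 := by
      simp [socialCost, Finset.univ_eq_empty]
    simp [h1, h2]
  · letI : DecidableEq P := Classical.decEq P
    obtain ⟨C, hC0, hCr⟩ := crux trip edges c hc d hd hne
    refine ⟨C + 1, by linarith, ?_⟩
    intro f g hf hWf hg
    set ε := epsFun trip edges c g with hε
    -- a positive-flow path of f in every trip
    choose pf hpf1 hpf2 using exists_pos_path trip d hd f hf
    -- ε is nonnegative
    obtain ⟨p₀, -, hp₀⟩ := exists_pos_path trip d hd g hg (Classical.arbitrary T)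
    have hε0 : 0 ≤ ε := eps_nonneg trip edges c g p₀ hp₀
    have hD : 0 < ∑ t, d t :=
      Finset.sum_pos (fun t _ => hd t) Finset.univ_nonempty
    -- pointwise bound for g
    have hgpt : ∀ p : P, g p * pathCost edges c g p ≤
        g p * (pathCost edges c g (pf (trip p)) + ε) := by
      intro p
      rcases eq_or_lt_of_le (hg.1 p) with h0 | h0
      · rw [← h0]; simp
      · apply mul_le_mul_of_nonneg_left _ (le_of_lt h0)
        have := eps_ge trip edges c g p (pf (trip p)) (hpf1 (trip p)).symm h0
        rw [← hε] at this
        linarith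
    -- social cost of g bounded via representatives
    have hgsum : socialCost edges c g ≤
        ∑ t, d t * (pathCost edges c g (pf t) + ε) := by
      calc socialCost edges c g
          ≤ ∑ p, g p * (pathCost edges c g (pf (trip p)) + ε) :=
            Finset.sum_le_sum fun p _ => hgpt p
        _ = ∑ t, ∑ p ∈ univ.filter (fun p => trip p = t),
              g p * (pathCost edges c g (pf (trip p)) + ε) :=
            (Finset.sum_fiberwise _ _ _).symm
        _ = ∑ t, d t * (pathCost edges c g (pf t) + ε) := by
            refine Finset.sum_congr rfl fun t _ => ?_
            rw [← hg.2 t, Finset.sum_mul]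
            refine Finset.sum_congr rfl fun p hp => ?_
            rw [(Finset.mem_filter.mp hp).2]
    -- social cost of f computed via representatives
    have hfpt : ∀ p : P, f p * pathCost edges c f p =
        f p * pathCost edges c f (pf (trip p)) := by
      intro p
      rcases eq_or_lt_of_le (hf.1 p) with h0 | h0
      · rw [← h0]; simp
      · congr 1
        exact le_antisymm
          (hWf p (pf (trip p)) (hpf1 (trip p)).symm h0)
          (hWf (pf (trip p)) p (hpf1 (trip p)) (hpf2 (trip p)))
    have hfsum : socialCost edges c f = ∑ t, d t * pathCost edges c f (pf t) := by
      calc socialCost edges c f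
          = ∑ p, f p * pathCost edges c f (pf (trip p)) :=
            Finset.sum_congr rfl fun p _ => hfpt p
        _ = ∑ t, ∑ p ∈ univ.filter (fun p => trip p = t),
              f p * pathCost edges c f (pf (trip p)) :=
            (Finset.sum_fiberwise _ _ _).symm
        _ = ∑ t, d t * pathCost edges c f (pf t) := by
            refine Finset.sum_congr rfl fun t _ => ?_
            rw [← hf.2 t, Finset.sum_mul]
            refine Finset.sum_congr rfl fun p hp => ?_
            rw [(Finset.mem_filter.mp hp).2]
    -- combine
    have hkey : socialCost edges c g - socialCost edges c f ≤
        (∑ t, d t) * ((C + 1) * ε) := by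
      have h1 : socialCost edges c g - socialCost edges c f ≤
          ∑ t, d t * (pathCost edges c g (pf t) - pathCost edges c f (pf t) + ε) := by
        rw [hfsum]
        have e1 : ∑ t, d t * (pathCost edges c g (pf t) - pathCost edges c f (pf t) + ε)
            = (∑ t, d t * (pathCost edges c g (pf t) + ε))
              - ∑ t, d t * pathCost edges c f (pf t) := by
          rw [← Finset.sum_sub_distrib]
          exact Finset.sum_congr rfl fun t _ => by ring
        rw [e1]
        linarith [hgsum]
      have h2 : ∀ t, d t * (pathCost edges c g (pf t) - pathCost edges c f (pf t) + ε) ≤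
          d t * ((C + 1) * ε) := by
        intro t
        apply mul_le_mul_of_nonneg_left _ (le_of_lt (hd t))
        have := hCr f g hf hWf hg (pf t) (hpf2 t)
        rw [← hε] at this
        linarith
      calc socialCost edges c g - socialCost edges c f
          ≤ ∑ t, d t * (pathCost edges c g (pf t) - pathCost edges c f (pf t) + ε) := h1
        _ ≤ ∑ t, d t * ((C + 1) * ε) := Finset.sum_le_sum fun t _ => h2 t
        _ = (∑ t, d t) * ((C + 1) * ε) := by rw [← Finset.sum_mul]
    rw [div_le_iff₀ hD]
    calc socialCost edges c g - socialCost edges c f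
        ≤ (∑ t, d t) * ((C + 1) * ε) := hkey
      _ = (C + 1) * ε * (∑ t, d t) := by ring
end

section
/- The threshold function ε : F_d → ℝ≥0, defined by ε(g) = max{c_P(g) − c_Q(g) : t trip, P, Q ∈ P_t, g_P > 0}, is lower semicontinuous on the set of feasible flows. -/
open Finset

lemma pathCost_continuous {E P : Type} [Fintype P] [DecidableEq E]
    (edges : P → Finset E) (c : E → ℝ → ℝ) (hc : ∀ e, Continuous (c e)) (p : P) :
    Continuous (fun g : P → ℝ => pathCost edges c g p) := by
  unfold pathCost edgeFlow
  exact continuous_finset_sum _ fun e _ =>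
    (hc e).comp (continuous_finset_sum _ fun q _ => continuous_apply q)

lemma epsSet_bddAbove {E T P : Type} [Fintype P] [DecidableEq E]
    (trip : P → T) (edges : P → Finset E) (c : E → ℝ → ℝ) (g : P → ℝ) :
    BddAbove {x | ∃ p q, trip p = trip q ∧ 0 < g p ∧
      x = pathCost edges c g p - pathCost edges c g q} := by
  apply Set.Finite.bddAbove
  apply Set.Finite.subset (Set.finite_range fun pq : P × P =>
    pathCost edges c g pq.1 - pathCost edges c g pq.2)
  rintro x ⟨p, q, _, _, rfl⟩
  exact ⟨(p, q), rfl⟩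

/-- The threshold function is lower semicontinuous on the set of feasible flows. -/
theorem stmt8 {E T P : Type} [Fintype E] [Fintype T] [Fintype P]
    [DecidableEq E] [DecidableEq T]
    (trip : P → T) (edges : P → Finset E) (c : E → ℝ → ℝ)
    (hc : ∀ e, Continuous (c e) ∧ Monotone (c e) ∧ ∀ x, 0 ≤ x → 0 ≤ c e x)
    (d : T → ℝ) (hd : ∀ t, 0 < d t) (hne : ∀ t, ∃ p, trip p = t) :
    LowerSemicontinuousOn (epsFun trip edges c) {g | Feasible trip d g} := by
  intro g hg y hy
  by_cases hP : Nonempty P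
  · -- the sup set at g is nonempty: some p has g p > 0
    have hSg : ∃ p, 0 < g p := by
      obtain ⟨p0⟩ := hP
      have hsum := hg.2 (trip p0)
      by_contra h
      push_neg at h
      have : ∑ p ∈ univ.filter (fun p => trip p = trip p0), g p ≤ 0 := by
        apply Finset.sum_nonpos
        intro p _
        exact h p
      linarith [hd (trip p0), hsum ▸ this]
    -- obtain an element of the set exceeding y
    have hne' : {x | ∃ p q, trip p = trip q ∧ 0 < g p ∧
        x = pathCost edges c g p - pathCost edges c g q}.Nonempty := by
      obtain ⟨p, hp⟩ := hSg
      exact ⟨0, p, p, rfl, hp, by ring⟩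
    obtain ⟨z, ⟨p, q, htpq, hgp, rfl⟩, hyz⟩ :=
      exists_lt_of_lt_csSup hne' hy
    -- the function h ↦ cost_p(h) - cost_q(h) is continuous; eval at p continuous
    have hcont : Continuous (fun h : P → ℝ =>
        pathCost edges c h p - pathCost edges c h q) :=
      (pathCost_continuous edges c (fun e => (hc e).1) p).sub
        (pathCost_continuous edges c (fun e => (hc e).1) q)
    have hopen : IsOpen {h : P → ℝ |
        y < pathCost edges c h p - pathCost edges c h q ∧ 0 < h p} := by
      apply IsOpen.inter
      · exact isOpen_lt continuous_const hcont
      · exact isOpen_lt continuous_const (continuous_apply p)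
    have hmem : g ∈ {h : P → ℝ |
        y < pathCost edges c h p - pathCost edges c h q ∧ 0 < h p} := ⟨hyz, hgp⟩
    filter_upwards [nhdsWithin_le_nhds (hopen.mem_nhds hmem)] with h hh
    calc y < pathCost edges c h p - pathCost edges c h q := hh.1
      _ ≤ epsFun trip edges c h :=
        le_csSup (epsSet_bddAbove trip edges c h) ⟨p, q, htpq, hh.2, rfl⟩
  · -- P empty: epsFun is constantly 0
    have hz : ∀ h : P → ℝ, epsFun trip edges c h = 0 := by
      intro h
      unfold epsFun
      convert Real.sSup_empty
      ext x
      simp only [Set.mem_setOf_eq, Set.mem_empty_iff_false, iff_false]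
      rintro ⟨p, _, _⟩
      exact hP ⟨p⟩
    rw [hz g] at hy
    filter_upwards with h
    rw [hz h]
    exact hy
end

section
/- In any network, if f and g are both user equilibria then c_e(f_e) = c_e(g_e) for every edge e; in particular all user equilibria have the same social cost. This follows from the fact that user equilibria are exactly the minimizers of the convex Beckmann potential Φ(h) = Σ_e ∫₀^{h_e} c_e(x) dx over the convex set of feasible flows, and Φ restricted to edge flows is convex with c_e nondecreasing. -/
open Finset

lemma swapSum {E P : Type} [Fintype E] [Fintype P] [DecidableEq E]
    (edges : P → Finset E) (c : E → ℝ → ℝ) (h g : P → ℝ) :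
    ∑ p, h p * pathCost edges c g p
      = ∑ e, edgeFlow edges h e * c e (edgeFlow edges g e) := by
  unfold pathCost edgeFlow
  calc ∑ p, h p * ∑ e ∈ edges p, c e (∑ q ∈ univ.filter (fun q => e ∈ edges q), g q)
      = ∑ p, ∑ e, (if e ∈ edges p then h p * c e (∑ q ∈ univ.filter (fun q => e ∈ edges q), g q) else 0) := by
        refine Finset.sum_congr rfl fun p _ => ?_
        rw [Finset.mul_sum, Finset.sum_ite_mem, Finset.univ_inter]
    _ = ∑ e, ∑ p, (if e ∈ edges p then h p * c e (∑ q ∈ univ.filter (fun q => e ∈ edges q), g q) else 0) :=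
        Finset.sum_comm
    _ = _ := by
        refine Finset.sum_congr rfl fun e _ => ?_
        rw [Finset.sum_ite, Finset.sum_const_zero, add_zero, ← Finset.sum_mul]

lemma VI {E T P : Type} [Fintype E] [Fintype T] [Fintype P]
    [DecidableEq E] [DecidableEq T]
    (trip : P → T) (edges : P → Finset E) (c : E → ℝ → ℝ)
    (d : T → ℝ) (hd : ∀ t, 0 < d t)
    (f g : P → ℝ) (hf : Feasible trip d f) (hg : Feasible trip d g)
    (hfUE : ∀ p q, trip p = trip q → 0 < f p →
      pathCost edges c f p ≤ pathCost edges c f q) :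
    ∑ p, f p * pathCost edges c f p ≤ ∑ p, g p * pathCost edges c f p := by
  rw [← Finset.sum_fiberwise univ trip (fun p => f p * pathCost edges c f p),
      ← Finset.sum_fiberwise univ trip (fun p => g p * pathCost edges c f p)]
  refine Finset.sum_le_sum fun t _ => ?_
  -- find a used path p0 in trip t
  have hpos : ∃ p0 ∈ univ.filter (fun p => trip p = t), 0 < f p0 := by
    by_contra h
    push_neg at h
    have : ∑ p ∈ univ.filter (fun p => trip p = t), f p = 0 := by
      refine Finset.sum_eq_zero fun p hp => le_antisymm (h p hp) (hf.1 p)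
    rw [hf.2 t] at this
    exact absurd this (ne_of_gt (hd t))
  obtain ⟨p0, hp0mem, hp0⟩ := hpos
  have hp0t : trip p0 = t := (Finset.mem_filter.mp hp0mem).2
  set μ := pathCost edges c f p0 with hμ
  have hle : ∀ p ∈ univ.filter (fun p => trip p = t), μ ≤ pathCost edges c f p := by
    intro p hp
    exact hfUE p0 p (hp0t.trans (Finset.mem_filter.mp hp).2.symm) hp0
  have heq : ∀ p ∈ univ.filter (fun p => trip p = t), 0 < f p → pathCost edges c f p = μ :=
    fun p hp hfp => le_antisymm
      (hfUE p p0 ((Finset.mem_filter.mp hp).2.trans hp0t.symm) hfp) (hle p hp)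
  calc ∑ p ∈ univ.filter (fun p => trip p = t), f p * pathCost edges c f p
      = ∑ p ∈ univ.filter (fun p => trip p = t), f p * μ := by
        refine Finset.sum_congr rfl fun p hp => ?_
        rcases lt_or_eq_of_le (hf.1 p) with h | h
        · rw [heq p hp h]
        · rw [← h, zero_mul, zero_mul]
    _ = d t * μ := by rw [← Finset.sum_mul, hf.2 t]
    _ = ∑ p ∈ univ.filter (fun p => trip p = t), g p * μ := by rw [← Finset.sum_mul, hg.2 t]
    _ ≤ ∑ p ∈ univ.filter (fun p => trip p = t), g p * pathCost edges c f p := by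
        refine Finset.sum_le_sum fun p hp => mul_le_mul_of_nonneg_left (hle p hp) (hg.1 p)

/-- Essential uniqueness of user equilibria: any two UE induce the same edge
latencies, hence the same social cost. -/
theorem stmt19 {E T P : Type} [Fintype E] [Fintype T] [Fintype P]
    [DecidableEq E] [DecidableEq T]
    (trip : P → T) (edges : P → Finset E) (c : E → ℝ → ℝ)
    (hc : ∀ e, Continuous (c e) ∧ Monotone (c e) ∧ ∀ x, 0 ≤ x → 0 ≤ c e x)
    (d : T → ℝ) (hd : ∀ t, 0 < d t) (hne : ∀ t, ∃ p, trip p = t)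
    (f g : P → ℝ) (hf : Feasible trip d f) (hg : Feasible trip d g)
    (hfUE : ∀ p q, trip p = trip q → 0 < f p →
      pathCost edges c f p ≤ pathCost edges c f q)
    (hgUE : ∀ p q, trip p = trip q → 0 < g p →
      pathCost edges c g p ≤ pathCost edges c g q) :
    (∀ e, c e (edgeFlow edges f e) = c e (edgeFlow edges g e)) ∧
    socialCost edges c f = socialCost edges c g := by
  set fE := edgeFlow edges f with hfE
  set gE := edgeFlow edges g with hgE
  have VIf : ∑ e, fE e * c e (fE e) ≤ ∑ e, gE e * c e (fE e) := by
    rw [← swapSum, ← swapSum]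
    exact VI trip edges c d hd f g hf hg hfUE
  have VIg : ∑ e, gE e * c e (gE e) ≤ ∑ e, fE e * c e (gE e) := by
    rw [← swapSum, ← swapSum]
    exact VI trip edges c d hd g f hg hf hgUE
  have hsum : ∑ e, (c e (fE e) - c e (gE e)) * (fE e - gE e) ≤ 0 := by
    have := add_le_add VIf VIg
    rw [← Finset.sum_add_distrib, ← Finset.sum_add_distrib] at this
    have h2 : ∑ e, ((c e (fE e) - c e (gE e)) * (fE e - gE e))
        = (∑ e, (fE e * c e (fE e) + gE e * c e (gE e)))
          - (∑ e, (gE e * c e (fE e) + fE e * c e (gE e))) := by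
      rw [← Finset.sum_sub_distrib]
      exact Finset.sum_congr rfl fun e _ => by ring
    rw [h2]
    linarith
  have hterm : ∀ e ∈ (univ : Finset E), 0 ≤ (c e (fE e) - c e (gE e)) * (fE e - gE e) := by
    intro e _
    rcases le_total (gE e) (fE e) with h | h
    · exact mul_nonneg (sub_nonneg.mpr ((hc e).2.1 h)) (sub_nonneg.mpr h)
    · nlinarith [sub_nonpos.mpr ((hc e).2.1 h), sub_nonpos.mpr h]
  have hzero : ∀ e ∈ (univ : Finset E), (c e (fE e) - c e (gE e)) * (fE e - gE e) = 0 := by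
    have := (Finset.sum_eq_zero_iff_of_nonneg hterm).mp
      (le_antisymm hsum (Finset.sum_nonneg hterm))
    exact this
  have hce : ∀ e, c e (fE e) = c e (gE e) := by
    intro e
    have := hzero e (Finset.mem_univ e)
    rcases mul_eq_zero.mp this with h | h
    · linarith
    · have : fE e = gE e := by linarith
      rw [this]
  refine ⟨hce, ?_⟩
  have h1 : socialCost edges c f = ∑ e, fE e * c e (fE e) := swapSum edges c f f
  have h2 : socialCost edges c g = ∑ e, gE e * c e (gE e) := swapSum edges c g g
  rw [h1, h2]
  have h3 : ∑ e, gE e * c e (gE e) = ∑ e, gE e * c e (fE e) := by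
    exact Finset.sum_congr rfl fun e _ => by rw [hce e]
  have h4 : ∑ e, fE e * c e (gE e) = ∑ e, fE e * c e (fE e) := by
    exact Finset.sum_congr rfl fun e _ => by rw [hce e]
  rw [h3] at h2 ⊢
  rw [h4] at VIg
  linarith
end
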